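/- arXiv:0906.1702 — 3 statements merged into one kernel-verified Lean document; each statement's English description precedes it below -/
import Mathlib

section
/- For a {0,1} matrix A of size n×n, if M is the random matrix with M_{ij} = ρ_{ij} A_{ij} where the ρ_{ij} are independent uniform random variables on {+1, −1}, then the expectation of (det M)^2 equals the permanent of A. -/
/-!
Expanding the determinant twice, `(det M)^2 = ∑_{π,σ} sgn π sgn σ ∏_i M i (π i) * M i (σ i)`.
Averaging over the signs kills every term with `π ≠ σ`: in a row `i` with `π i ≠ σ i` the two
independent signs `ρ i (π i)`, `ρ i (σ i)` have product of mean zero. The diagonal terms leave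
`∑_π ∏_i A i (π i) ^ 2`, which is `perm A` when the entries of `A` are `0` or `1`.
-/

open Finset

noncomputable def permanent {n : ℕ} (A : Matrix (Fin n) (Fin n) ℝ) : ℝ :=
  ∑ π : Equiv.Perm (Fin n), ∏ i, A i (π i)

section Ring

variable {R : Type*} [Ring R]

def boolSign (b : Bool) : R := if b then 1 else -1

@[simp]
lemma boolSign_mul_self (b : Bool) : boolSign b * boolSign b = (1 : R) := by
  cases b <;> simp [boolSign]

@[simp]
lemma boolSign_not (b : Bool) : boolSign (!b) = -(boolSign b : R) := by
  cases b <;> simp [boolSign]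

variable {ι : Type*} [Fintype ι] [DecidableEq ι]

lemma sum_boolSign_mul_boolSign (a b : ι) :
    ∑ v : ι → Bool, boolSign (v a) * boolSign (v b)
      = if a = b then (2 : R) ^ Fintype.card ι else 0 := by
  split_ifs with hab
  · simp [hab]
  · have flip_a (v : ι → Bool) : Function.update v a (!v a) a = !v a := by simp
    have flip_b (v : ι → Bool) : Function.update v a (!v a) b = v b :=
      Function.update_of_ne (Ne.symm hab) _ _
    -- flipping the coordinate `a` is a fixed-point-free involution negating the summand
    refine sum_ninvolution (fun v => Function.update v a (!v a)) (fun v => ?_)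
      (fun v _ h => ?_) (fun _ => mem_univ _) (fun v => ?_)
    · rw [flip_a, flip_b, boolSign_not, neg_mul, add_neg_cancel]
    · simpa [flip_a] using congrFun h a
    · simp

end Ring

section CommRing

variable {R : Type*} [CommRing R] {ι κ : Type*} [Fintype ι] [DecidableEq ι] [Fintype κ]
  [DecidableEq κ]

lemma sum_prod_boolSign_mul_boolSign (f g : ι → κ) :
    ∑ ε : ι → κ → Bool, ∏ i, boolSign (ε i (f i)) * boolSign (ε i (g i))
      = if f = g then (2 : R) ^ (Fintype.card ι * Fintype.card κ) else 0 := by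
  calc _ = ∏ i, ∑ v : κ → Bool, (boolSign (v (f i)) * boolSign (v (g i)) : R) :=
        (Fintype.prod_sum _).symm
    _ = _ := by
      simp only [sum_boolSign_mul_boolSign, Fintype.prod_ite_zero, funext_iff, prod_const,
        card_univ, pow_mul']

def signedMatrix (A : Matrix ι ι R) (ε : ι → ι → Bool) : Matrix ι ι R :=
  Matrix.of fun i j => boolSign (ε i j) * A i j

lemma det_sq_eq_sum_sum (M : Matrix ι ι R) :
    M.det ^ 2 = ∑ π : Equiv.Perm ι, ∑ σ : Equiv.Perm ι,
      (Equiv.Perm.sign π * Equiv.Perm.sign σ : ℤ) * ∏ i, M i (π i) * M i (σ i) := by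
  rw [← M.det_transpose, Matrix.det_apply', sq, sum_mul_sum]
  refine sum_congr rfl fun π _ => sum_congr rfl fun σ _ => ?_
  simp only [Matrix.transpose_apply, prod_mul_distrib]
  push_cast
  ring

theorem sum_det_signedMatrix_sq (A : Matrix ι ι R) :
    ∑ ε, (signedMatrix A ε).det ^ 2
      = 2 ^ (Fintype.card ι * Fintype.card ι) * ∑ π : Equiv.Perm ι, ∏ i, A i (π i) ^ 2 := by
  have separate_signs (ε) (π σ : Equiv.Perm ι) :
      ∏ i, signedMatrix A ε i (π i) * signedMatrix A ε i (σ i)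
        = (∏ i, A i (π i) * A i (σ i)) * ∏ i, boolSign (ε i (π i)) * boolSign (ε i (σ i)) := by
    rw [← prod_mul_distrib]
    exact prod_congr rfl fun i _ => by simp only [signedMatrix, Matrix.of_apply]; ring
  simp only [det_sq_eq_sum_sum, separate_signs]
  rw [sum_comm, mul_sum]
  refine sum_congr rfl fun π _ => ?_
  rw [sum_comm]
  simp only [← mul_sum, sum_prod_boolSign_mul_boolSign, DFunLike.coe_fn_eq, mul_ite, mul_zero,
    sum_ite_eq, mem_univ, if_true]
  rw [← Units.val_mul, Int.units_mul_self, Units.val_one, Int.cast_one, one_mul]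
  simp only [sq]
  ring

end CommRing

/-- The expectation over the i.i.d. uniform signs is the average over all `2 ^ (n * n)` sign
assignments `ε`. -/
theorem godsil_gutman (n : ℕ) (A : Matrix (Fin n) (Fin n) ℝ)
    (hA : ∀ i j, A i j = 0 ∨ A i j = 1) :
    (1 / 2 ^ (n * n) : ℝ) *
      ∑ ε : Fin n → Fin n → Bool,
        (Matrix.det (Matrix.of fun i j => (if ε i j then (1 : ℝ) else -1) * A i j)) ^ 2
    = permanent A := by
  have hA_sq (i j) : A i j ^ 2 = A i j := by rcases hA i j with h | h <;> simp [h]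
  change (1 / 2 ^ (n * n) : ℝ) * ∑ ε, (signedMatrix A ε).det ^ 2 = _
  rw [sum_det_signedMatrix_sq, Fintype.card_fin, one_div, inv_mul_cancel_left₀ (by positivity)]
  simp only [hA_sq, permanent]
end

section
/- Suppose permutations κ, λ, μ, ν ∈ S_n satisfy the following: for each i there is a partition of {κ, λ} and {μ, ν} into matched pairs such that for all i, j the number of σ ∈ {κ, λ} with σ(i)=j equals the number of σ ∈ {μ, ν} with σ(i)=j. Then sgn(κ)·sgn(λ)·sgn(μ)·sgn(ν) = 1. -/
/-!
At every point `i` the pair `(μ i, ν i)` is `(κ i, lam i)` up to order. Pointwise this forces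
`ν = lam * μ⁻¹ * κ`, so `sgn ν = sgn lam · sgn μ · sgn κ` and the product of the four signs is a
product of squares in `ℤˣ = {±1}`.
-/

open Equiv

theorem eq_and_eq_or_eq_and_eq_of_ite_add_ite_eq {α : Type*} [DecidableEq α] {a b c d : α}
    (h : ∀ j, ((if a = j then 1 else 0) + (if b = j then 1 else 0) : ℕ)
      = (if c = j then 1 else 0) + (if d = j then 1 else 0)) :
    (c = a ∧ d = b) ∨ (c = b ∧ d = a) := by
  by_cases hca : c = a
  · subst hca
    have hb := h b
    simp only [add_left_cancel_iff] at hb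
    exact Or.inl ⟨rfl, by split_ifs at hb <;> simp_all⟩
  · have hc := h c
    have ha := h a
    simp only [if_neg (Ne.symm hca), if_neg hca] at hc ha
    split_ifs at hc ha <;> simp_all

namespace Equiv.Perm

theorem eq_mul_inv_mul_of_forall_eq_or_swap {α : Type*} {κ lam μ ν : Perm α}
    (h : ∀ i, (μ i = κ i ∧ ν i = lam i) ∨ (μ i = lam i ∧ ν i = κ i)) :
    ν = lam * μ⁻¹ * κ := by
  ext i
  obtain ⟨j, hj⟩ := μ.surjective (κ i)
  suffices ν i = lam j by simp [← hj, this]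
  rcases h i with ⟨hμi, hνi⟩ | ⟨-, hνi⟩
  · rw [μ.injective (hj.trans hμi.symm), hνi]
  rcases h j with ⟨hμj, hνj⟩ | ⟨hμj, -⟩
  · rw [← κ.injective (hμj.symm.trans hj), hνj]
  · rw [hνi, ← hj, hμj]

end Equiv.Perm

/-- If the multiset of pairs `{(i, κ i)} ∪ {(i, lam i)}` equals the multiset
`{(i, μ i)} ∪ {(i, ν i)}`, then `sgn κ · sgn lam · sgn μ · sgn ν = 1`. -/
theorem double_cycle_cover_sign (n : ℕ) (κ lam μ ν : Equiv.Perm (Fin n))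
    (h : ∀ i j : Fin n,
      ((if κ i = j then 1 else 0) + (if lam i = j then 1 else 0) : ℕ)
        = (if μ i = j then 1 else 0) + (if ν i = j then 1 else 0)) :
    Equiv.Perm.sign κ * Equiv.Perm.sign lam * Equiv.Perm.sign μ * Equiv.Perm.sign ν
      = 1 := by
  have hν : ν = lam * μ⁻¹ * κ := Perm.eq_mul_inv_mul_of_forall_eq_or_swap
    fun i => eq_and_eq_or_eq_and_eq_of_ite_add_ite_eq (h i)
  rw [hν, map_mul, map_mul, Perm.sign_inv]
  calc _ = (Perm.sign κ * Perm.sign κ) * (Perm.sign lam * Perm.sign lam)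
        * (Perm.sign μ * Perm.sign μ) := by ac_rfl
    _ = 1 := by simp only [Int.units_mul_self, mul_one]
end

section
/- For an n×n matrix A with entries in {0,1}, (perm A)² = Σ_{C ⊢ A} 2^{t(C)}, where the sum is over double cycle covers C of the bipartite graph of A and t(C) is the number of cycles (of length > 2) in C. -/
open Finset
open scoped Classical

/-- `C` is a double cycle cover of the `{0,1}` matrix `A`: multiplicities in
`{0,2,4}`, supported on the edges of `A`, and every vertex of the bipartite graph
has total degree `4`. -/
def IsDoubleCycleCover {n : ℕ} (A : Matrix (Fin n) (Fin n) ℝ)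
    (C : Fin n → Fin n → Fin 5) : Prop :=
  (∀ i j, (C i j : ℕ) = 0 ∨ (C i j : ℕ) = 2 ∨ (C i j : ℕ) = 4) ∧
  (∀ i j, A i j = 0 → (C i j : ℕ) = 0) ∧
  (∀ i, ∑ j, (C i j : ℕ) = 4) ∧ (∀ j, ∑ i, (C i j : ℕ) = 4)

/-- The bipartite (simple) graph on `Fin n ⊕ Fin n` whose edges are the doubly
covered edges of `C`, i.e. those with multiplicity `2`. -/
def coverGraph {n : ℕ} (C : Fin n → Fin n → Fin 5) : SimpleGraph (Fin n ⊕ Fin n) :=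
  SimpleGraph.fromRel fun u v =>
    ∃ i j, u = Sum.inl i ∧ v = Sum.inr j ∧ (C i j : ℕ) = 2

/-- `t(C)`: the number of cycles of length `> 2` in the double cycle cover `C`,
i.e. the number of connected components of the graph of doubly covered edges that
actually contain such an edge. -/
noncomputable def numCycles {n : ℕ} (C : Fin n → Fin n → Fin 5) : ℕ :=
  Nat.card {comp : (coverGraph C).ConnectedComponent //
    ∃ i, (∃ j, (C i j : ℕ) = 2) ∧
      (coverGraph C).connectedComponentMk (Sum.inl i) = comp}

/-! Expanding the square, `(perm A)²` counts ordered pairs `(π, σ)` of perfect matchings of `A`,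
and the superposition of such a pair is a double cycle cover of `A`. Conversely every double
cycle cover `C` is a superposition: halved, it is a `2`-regular bipartite multigraph, which splits
into two perfect matchings by Hall's theorem. Fix one such pair `(π₀, σ₀)`. For any other pair
`(π, σ)` with superposition `C`, each row `i` has `{π i, σ i} = {π₀ i, σ₀ i}`, and whether
`π` agrees with `π₀` propagates along the doubly covered edges, so it is constant on each cycle of
`C`. Conversely, exchanging `π₀` and `σ₀` on the rows of any set of cycles gives such a pair.
Hence every `C ⊢ A` is the superposition of exactly `2 ^ t(C)` pairs. -/

section LineSums

variable {ι : Type*} [Fintype ι] [DecidableEq ι]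

theorem exists_perm_forall_ne_zero_of_line_sums {M : ι → ι → ℕ} {k : ℕ} (hk : 0 < k)
    (hrow : ∀ i, ∑ j, M i j = k) (hcol : ∀ j, ∑ i, M i j = k) :
    ∃ π : Equiv.Perm ι, ∀ i, M i (π i) ≠ 0 := by
  let N : ι → Finset ι := fun i => {j | M i j ≠ 0}
  have hall (s : Finset ι) : #s ≤ #(s.biUnion N) := by
    have hrow' : ∀ i ∈ s, ∑ j ∈ s.biUnion N, M i j = k := fun i hi => by
      rw [← hrow i]
      refine sum_subset (subset_univ _) fun j _ hj => ?_
      by_contra h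
      exact hj (mem_biUnion.2 ⟨i, hi, by simpa [N] using h⟩)
    refine Nat.le_of_mul_le_mul_left ?_ hk
    calc k * #s = ∑ i ∈ s, ∑ j ∈ s.biUnion N, M i j := by simp [sum_congr rfl hrow', mul_comm]
      _ = ∑ j ∈ s.biUnion N, ∑ i ∈ s, M i j := sum_comm
      _ ≤ ∑ _j ∈ s.biUnion N, k :=
        sum_le_sum fun j _ => hcol j ▸ sum_le_sum_of_subset (subset_univ _)
      _ = k * #(s.biUnion N) := by simp [mul_comm]
  obtain ⟨f, hf, hfN⟩ := (all_card_le_biUnion_card_iff_exists_injective N).1 hall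
  exact ⟨Equiv.ofBijective f (Finite.injective_iff_bijective.1 hf),
    fun i => by simpa [N] using hfN i⟩

-- The integer case of the Birkhoff–von Neumann theorem.
theorem exists_eq_sum_perm_of_line_sums (k : ℕ) {M : ι → ι → ℕ}
    (hrow : ∀ i, ∑ j, M i j = k) (hcol : ∀ j, ∑ i, M i j = k) :
    ∃ π : Fin k → Equiv.Perm ι, ∀ i j, M i j = ∑ l, if π l i = j then 1 else 0 := by
  induction k generalizing M with
  | zero => exact ⟨Fin.elim0, fun i j => by simpa using sum_eq_zero_iff.1 (hrow i) j⟩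
  | succ k ih =>
    obtain ⟨π, hπ⟩ := exists_perm_forall_ne_zero_of_line_sums k.succ_pos hrow hcol
    let P : ι → ι → ℕ := fun i j => if π i = j then 1 else 0
    have hPM (i j : ι) : P i j ≤ M i j := by
      by_cases h : π i = j
      · simpa [P, h, Nat.one_le_iff_ne_zero] using h ▸ hπ i
      · simp [P, h]
    have hrow' (i : ι) : ∑ j, (M i j - P i j) = k := by
      rw [sum_tsub_distrib _ fun j _ => hPM i j, hrow i]
      simp [P]
    have hcol' (j : ι) : ∑ i, (M i j - P i j) = k := by
      rw [sum_tsub_distrib _ fun i _ => hPM i j, hcol j]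
      simp [P, ← Equiv.Perm.eq_inv_iff_eq]
    obtain ⟨ρ, hρ⟩ := ih hrow' hcol'
    refine ⟨Fin.cons π ρ, fun i j => ?_⟩
    rw [Fin.sum_univ_succ]
    simp only [Fin.cons_zero, Fin.cons_succ, ← hρ]
    have := hPM i j
    simp only [P] at this ⊢
    omega

end LineSums

theorem SimpleGraph.Reachable.iff_of_forall_adj {V : Type*} {G : SimpleGraph V} {p : V → Prop}
    (hp : ∀ u v, G.Adj u v → (p u ↔ p v)) {u v : V} (huv : G.Reachable u v) : p u ↔ p v := by
  obtain ⟨w⟩ := huv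
  induction w with
  | nil => rfl
  | cons hadj _ ih => exact (hp _ _ hadj).trans ih

namespace DoubleCycleCover

variable {n : ℕ} {C : Fin n → Fin n → Fin 5} {π σ π₀ σ₀ : Equiv.Perm (Fin n)}

def IsSuperposition (C : Fin n → Fin n → Fin 5) (π σ : Equiv.Perm (Fin n)) : Prop :=
  ∀ i j, (C i j : ℕ) = (if π i = j then 2 else 0) + (if σ i = j then 2 else 0)

def superposition (π σ : Equiv.Perm (Fin n)) (i j : Fin n) : Fin 5 :=
  if π i = j then (if σ i = j then 4 else 2) else (if σ i = j then 2 else 0)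

theorem isSuperposition_superposition (π σ : Equiv.Perm (Fin n)) :
    IsSuperposition (superposition π σ) π σ := fun i j => by
  unfold superposition
  split_ifs <;> rfl

theorem superposition_eq_iff : superposition π σ = C ↔ IsSuperposition C π σ := by
  refine ⟨(· ▸ isSuperposition_superposition π σ), fun h => ?_⟩
  funext i j
  exact Fin.ext ((isSuperposition_superposition π σ i j).trans (h i j).symm)

namespace IsSuperposition

theorem symm (h : IsSuperposition C π σ) : IsSuperposition C σ π :=
  fun i j => (h i j).trans (Nat.add_comm _ _)

theorem transpose (h : IsSuperposition C π σ) :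
    IsSuperposition (Function.swap C) π⁻¹ σ⁻¹ := fun j i => by
  simp only [Function.swap, h i j, Equiv.Perm.inv_eq_iff_eq, @eq_comm _ j]

theorem sum_row (h : IsSuperposition C π σ) (i : Fin n) : ∑ j, (C i j : ℕ) = 4 := by
  simp [h i, sum_add_distrib]

theorem sum_col (h : IsSuperposition C π σ) (j : Fin n) : ∑ i, (C i j : ℕ) = 4 :=
  h.transpose.sum_row j

theorem exists_eq_two_iff (h : IsSuperposition C π σ) (i : Fin n) :
    (∃ j, (C i j : ℕ) = 2) ↔ π i ≠ σ i := by
  refine ⟨fun ⟨j, hj⟩ hπσ => ?_, fun hπσ => ⟨π i, by simp [h i, hπσ.symm]⟩⟩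
  rw [h i j, hπσ] at hj
  split_ifs at hj <;> omega

theorem isDoubleCycleCover {A : Matrix (Fin n) (Fin n) ℝ} (h : IsSuperposition C π σ)
    (hπ : ∀ i, A i (π i) ≠ 0) (hσ : ∀ i, A i (σ i) ≠ 0) : IsDoubleCycleCover A C := by
  refine ⟨fun i j => ?_, fun i j hA => ?_, h.sum_row, h.sum_col⟩
  · rw [h i j]; split_ifs <;> simp
  · have : π i ≠ j := fun e => hπ i (e ▸ hA)
    have : σ i ≠ j := fun e => hσ i (e ▸ hA)
    simp [h i j, *]

theorem row_cases (h : IsSuperposition C π σ) (h₀ : IsSuperposition C π₀ σ₀) (i : Fin n) :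
    (π i = π₀ i ∧ σ i = σ₀ i) ∨ (π i = σ₀ i ∧ σ i = π₀ i) := by
  have e := fun j => (h i j).symm.trans (h₀ i j)
  have e1 := e (π i); have e2 := e (σ i); have e3 := e (π₀ i); have e4 := e (σ₀ i)
  generalize π i = a, σ i = b, π₀ i = c, σ₀ i = d at *
  grind

theorem eq_two_of_apply_eq (h : IsSuperposition C π σ) {a b : Fin n} (hab : a ≠ b)
    (he : π a = σ b) : (C a (π a) : ℕ) = 2 ∧ (C b (π a) : ℕ) = 2 := by
  have hσ : σ a ≠ π a := fun e => hab (σ.injective (e.trans he))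
  have hπ : π b ≠ π a := fun e => hab (π.injective e).symm
  have hσb : σ b = π a := he.symm
  simp [h a, h b, hσ, hπ, hσb]

theorem inv_apply_eq_of_apply_eq (h : IsSuperposition C π σ) (h₀ : IsSuperposition C π₀ σ₀)
    {i j : Fin n} (hij : (C i j : ℕ) ≠ 0) (he : π i = π₀ i) : π⁻¹ j = π₀⁻¹ j := by
  by_cases hπ : π i = j
  · rw [Equiv.Perm.inv_eq_iff_eq.2 hπ.symm, Equiv.Perm.inv_eq_iff_eq.2 (he.symm.trans hπ).symm]
  have hσ : σ i = j := by
    by_contra hσ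
    exact hij (by simp [h i j, hπ, hσ])
  have hσ₀ : σ₀ i = j := by
    rcases h.row_cases h₀ i with ⟨-, e⟩ | ⟨e, e'⟩
    · exact e ▸ hσ
    · exact absurd (he.trans (e'.symm.trans hσ)) hπ
  rcases h.transpose.row_cases h₀.transpose j with ⟨e, -⟩ | ⟨e, -⟩
  · exact e
  · refine absurd ?_ hπ
    rw [Equiv.Perm.inv_eq_iff_eq.1 (e.trans (Equiv.Perm.inv_eq_iff_eq.2 hσ₀.symm))]

theorem apply_eq_iff_inv_apply_eq (h : IsSuperposition C π σ) (h₀ : IsSuperposition C π₀ σ₀)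
    {i j : Fin n} (hij : (C i j : ℕ) ≠ 0) : π i = π₀ i ↔ π⁻¹ j = π₀⁻¹ j :=
  ⟨h.inv_apply_eq_of_apply_eq h₀ hij, fun e => by
    simpa using h.transpose.inv_apply_eq_of_apply_eq h₀.transpose (i := j) hij e⟩

end IsSuperposition

theorem _root_.IsDoubleCycleCover.exists_isSuperposition {A : Matrix (Fin n) (Fin n) ℝ}
    (hC : IsDoubleCycleCover A C) : ∃ π σ, IsSuperposition C π σ := by
  obtain ⟨hval, -, hrow, hcol⟩ := hC
  have hhalf (i j : Fin n) : (C i j : ℕ) / 2 * 2 = C i j := by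
    rcases hval i j with h | h | h <;> omega
  have hrow' (i : Fin n) : ∑ j, (C i j : ℕ) / 2 = 2 := by
    have := (sum_mul _ _ 2).trans ((sum_congr rfl fun j _ => hhalf i j).trans (hrow i))
    omega
  have hcol' (j : Fin n) : ∑ i, (C i j : ℕ) / 2 = 2 := by
    have := (sum_mul _ _ 2).trans ((sum_congr rfl fun i _ => hhalf i j).trans (hcol j))
    omega
  obtain ⟨f, hf⟩ := exists_eq_sum_perm_of_line_sums 2 hrow' hcol'
  refine ⟨f 0, f 1, fun i j => ?_⟩
  have := hhalf i j
  rw [hf i j, Fin.sum_univ_two] at this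
  split_ifs at this ⊢ <;> omega

def agreesAt (π π₀ : Equiv.Perm (Fin n)) : Fin n ⊕ Fin n → Prop
  | .inl i => π i = π₀ i
  | .inr j => π⁻¹ j = π₀⁻¹ j

theorem coverGraph_adj_of_eq_two {i j : Fin n} (h : (C i j : ℕ) = 2) :
    (coverGraph C).Adj (.inl i) (.inr j) := by
  rw [coverGraph, SimpleGraph.fromRel_adj]
  exact ⟨by simp, .inl ⟨i, j, rfl, rfl, h⟩⟩

theorem IsSuperposition.agreesAt_iff_of_reachable (h : IsSuperposition C π σ)
    (h₀ : IsSuperposition C π₀ σ₀) {u v : Fin n ⊕ Fin n} (huv : (coverGraph C).Reachable u v) :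
    agreesAt π π₀ u ↔ agreesAt π π₀ v := by
  refine huv.iff_of_forall_adj fun u v hadj => ?_
  rw [coverGraph, SimpleGraph.fromRel_adj] at hadj
  obtain ⟨-, ⟨i, j, rfl, rfl, hij⟩ | ⟨i, j, rfl, rfl, hij⟩⟩ := hadj
  · exact h.apply_eq_iff_inv_apply_eq h₀ (by omega)
  · exact (h.apply_eq_iff_inv_apply_eq h₀ (by omega)).symm

def cycleComponents (C : Fin n → Fin n → Fin 5) : Type :=
  {comp : (coverGraph C).ConnectedComponent //
    ∃ i, (∃ j, (C i j : ℕ) = 2) ∧ (coverGraph C).connectedComponentMk (Sum.inl i) = comp}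

noncomputable instance : Fintype (cycleComponents C) := by
  unfold cycleComponents
  infer_instance

theorem numCycles_eq_card : numCycles C = Fintype.card (cycleComponents C) :=
  Nat.card_eq_fintype_card

def rowComponent (C : Fin n → Fin n → Fin 5) (i : Fin n) (hi : ∃ j, (C i j : ℕ) = 2) :
    cycleComponents C :=
  ⟨(coverGraph C).connectedComponentMk (.inl i), i, hi, rfl⟩

theorem rowComponent_eq {i i' j : Fin n} (h : (C i j : ℕ) = 2) (h' : (C i' j : ℕ) = 2) :
    rowComponent C i ⟨j, h⟩ = rowComponent C i' ⟨j, h'⟩ :=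
  Subtype.ext <| SimpleGraph.ConnectedComponent.sound <|
    (coverGraph_adj_of_eq_two h).reachable.trans (coverGraph_adj_of_eq_two h').reachable.symm

def IsFlipped (S : Set (cycleComponents C)) (i : Fin n) : Prop :=
  ∃ hi, rowComponent C i hi ∈ S

theorem isFlipped_iff {S : Set (cycleComponents C)} {i : Fin n} (hi : ∃ j, (C i j : ℕ) = 2) :
    IsFlipped S i ↔ rowComponent C i hi ∈ S :=
  ⟨fun ⟨_, h⟩ => h, fun h => ⟨hi, h⟩⟩

theorem isFlipped_iff_of_eq_two {S : Set (cycleComponents C)} {i i' j : Fin n}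
    (h : (C i j : ℕ) = 2) (h' : (C i' j : ℕ) = 2) : IsFlipped S i ↔ IsFlipped S i' := by
  rw [isFlipped_iff ⟨j, h⟩, isFlipped_iff ⟨j, h'⟩, rowComponent_eq h h']

noncomputable def flipRows (S : Set (cycleComponents C)) (π₀ σ₀ : Equiv.Perm (Fin n))
    (i : Fin n) : Fin n :=
  if IsFlipped S i then σ₀ i else π₀ i

theorem flipRows_injective (h₀ : IsSuperposition C π₀ σ₀) (S : Set (cycleComponents C)) :
    Function.Injective (flipRows S π₀ σ₀) := by
  intro a b he
  by_contra hab
  unfold flipRows at he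
  split_ifs at he with ha hb hb
  · exact hab (σ₀.injective he)
  · obtain ⟨hb2, ha2⟩ := h₀.eq_two_of_apply_eq (Ne.symm hab) he.symm
    exact hb ((isFlipped_iff_of_eq_two ha2 hb2).1 ha)
  · obtain ⟨ha2, hb2⟩ := h₀.eq_two_of_apply_eq hab he
    exact ha ((isFlipped_iff_of_eq_two hb2 ha2).1 hb)
  · exact hab (π₀.injective he)

noncomputable def flipPair (h₀ : IsSuperposition C π₀ σ₀) (S : Set (cycleComponents C)) :
    Equiv.Perm (Fin n) × Equiv.Perm (Fin n) :=
  (.ofBijective _ (Finite.injective_iff_bijective.1 (flipRows_injective h₀ S)),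
   .ofBijective _ (Finite.injective_iff_bijective.1 (flipRows_injective h₀.symm S)))

theorem isSuperposition_flipPair (h₀ : IsSuperposition C π₀ σ₀) (S : Set (cycleComponents C)) :
    IsSuperposition C (flipPair h₀ S).1 (flipPair h₀ S).2 := fun i j => by
  by_cases hi : IsFlipped S i
  · simpa [flipPair, flipRows, hi] using h₀.symm i j
  · simpa [flipPair, flipRows, hi] using h₀ i j

theorem flipPair_injective (h₀ : IsSuperposition C π₀ σ₀) : Function.Injective (flipPair h₀) := by
  intro S₁ S₂ he
  ext ⟨_, i, hi, rfl⟩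
  have hπ : flipRows S₁ π₀ σ₀ i = flipRows S₂ π₀ σ₀ i := congrArg (fun x => x.1 i) he
  have hne := (h₀.exists_eq_two_iff i).1 hi
  change rowComponent C i hi ∈ S₁ ↔ rowComponent C i hi ∈ S₂
  rw [← isFlipped_iff hi, ← isFlipped_iff hi]
  unfold flipRows at hπ
  split_ifs at hπ <;> tauto

theorem exists_flipPair_eq (h₀ : IsSuperposition C π₀ σ₀) (h : IsSuperposition C π σ) :
    ∃ S, flipPair h₀ S = (π, σ) := by
  let S : Set (cycleComponents C) := {c | π c.2.choose ≠ π₀ c.2.choose}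
  have hS (i : Fin n) (hi) : rowComponent C i hi ∈ S ↔ π i ≠ π₀ i :=
    not_congr <| h.agreesAt_iff_of_reachable h₀ <|
      SimpleGraph.ConnectedComponent.exact (rowComponent C i hi).2.choose_spec.2
  have hrow (i : Fin n) : flipRows S π₀ σ₀ i = π i ∧ flipRows S σ₀ π₀ i = σ i := by
    by_cases hi : ∃ j, (C i j : ℕ) = 2
    · have hne := (h₀.exists_eq_two_iff i).1 hi
      simp only [flipRows, isFlipped_iff hi, hS]
      rcases h.row_cases h₀ i with ⟨e1, e2⟩ | ⟨e1, e2⟩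
      · simp [e1, e2]
      · simp [e1, e2, hne.symm]
    · have hπσ : π i = σ i := not_ne_iff.1 fun e => hi ((h.exists_eq_two_iff i).2 e)
      have hπσ₀ : π₀ i = σ₀ i := not_ne_iff.1 fun e => hi ((h₀.exists_eq_two_iff i).2 e)
      have : ¬IsFlipped S i := fun ⟨hi', _⟩ => hi hi'
      simp only [flipRows, if_neg this]
      rcases h.row_cases h₀ i with ⟨e1, e2⟩ | ⟨e1, e2⟩ <;> grind
  exact ⟨S, Prod.ext (Equiv.ext fun i => (hrow i).1) (Equiv.ext fun i => (hrow i).2)⟩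

theorem card_isSuperposition (h₀ : IsSuperposition C π₀ σ₀) :
    #{x : Equiv.Perm (Fin n) × Equiv.Perm (Fin n) | IsSuperposition C x.1 x.2} =
      2 ^ numCycles C := by
  have : ({x | IsSuperposition C x.1 x.2} : Finset (Equiv.Perm (Fin n) × Equiv.Perm (Fin n))) =
      univ.image (flipPair h₀) := by
    ext ⟨π, σ⟩
    simp only [mem_filter, mem_univ, true_and, mem_image]
    refine ⟨exists_flipPair_eq h₀, fun ⟨S, hS⟩ => ?_⟩
    obtain ⟨rfl, rfl⟩ := Prod.ext_iff.1 hS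
    exact isSuperposition_flipPair h₀ S
  rw [this, card_image_of_injective _ (flipPair_injective h₀), card_univ, Fintype.card_set,
    numCycles_eq_card]

theorem supported_and_superposition_eq_iff {A : Matrix (Fin n) (Fin n) ℝ} :
    ((∀ i, A i (π i) ≠ 0) ∧ ∀ i, A i (σ i) ≠ 0) ∧ superposition π σ = C ↔
      IsDoubleCycleCover A C ∧ IsSuperposition C π σ := by
  rw [superposition_eq_iff]
  refine ⟨fun ⟨⟨hπ, hσ⟩, h⟩ => ⟨h.isDoubleCycleCover hπ hσ, h⟩, fun ⟨hC, h⟩ => ⟨⟨?_, ?_⟩, h⟩⟩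
  · intro i hA
    simpa [h i] using hC.2.1 i _ hA
  · intro i hA
    simpa [h i] using hC.2.1 i _ hA

theorem sq_permanent_eq_card {A : Matrix (Fin n) (Fin n) ℝ} (hA : ∀ i j, A i j = 0 ∨ A i j = 1) :
    permanent A ^ 2 =
      #{x : Equiv.Perm (Fin n) × Equiv.Perm (Fin n) |
        (∀ i, A i (x.1 i) ≠ 0) ∧ ∀ i, A i (x.2 i) ≠ 0} := by
  have hprod (π : Equiv.Perm (Fin n)) :
      ∏ i, A i (π i) = if ∀ i, A i (π i) ≠ 0 then 1 else 0 := by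
    split_ifs with h
    · exact prod_eq_one fun i _ => (hA i (π i)).resolve_left (h i)
    · obtain ⟨i, hi⟩ := not_forall_not.1 h
      exact prod_eq_zero (mem_univ i) hi
  rw [permanent, sq, sum_mul_sum, ← Fintype.sum_prod_type']
  simp only [hprod, ite_zero_mul_ite_zero, mul_one]
  rw [sum_boole]

end DoubleCycleCover

open DoubleCycleCover

/-- For a `{0,1}` matrix `A`, `(perm A)² = Σ_{C ⊢ A} 2^{t(C)}`, the sum over all
double cycle covers `C` of the bipartite graph of `A`, where `t(C)` is the number of
cycles of length `> 2` in `C`. -/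
theorem perm_sq_eq_sum_double_cycle_covers (n : ℕ) (A : Matrix (Fin n) (Fin n) ℝ)
    (hA : ∀ i j, A i j = 0 ∨ A i j = 1) :
    permanent A ^ 2 =
      ∑ C : Fin n → Fin n → Fin 5,
        if IsDoubleCycleCover A C then (2 : ℝ) ^ numCycles C else 0 := by
  rw [sq_permanent_eq_card hA, card_eq_sum_card_fiberwise
    (f := fun x => superposition x.1 x.2) (t := univ) fun _ _ => mem_univ _]
  push_cast
  refine sum_congr rfl fun C _ => ?_
  simp only [filter_filter, supported_and_superposition_eq_iff]
  split_ifs with hC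
  · obtain ⟨π₀, σ₀, h₀⟩ := hC.exists_isSuperposition
    simp [hC, card_isSuperposition h₀]
  · simp [hC]
end
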